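/- The matrix A_{n,k} = k·χ_n(k)/n (for 0 ≤ k ≤ n, and 0 otherwise) satisfies the three Toeplitz–Schur regularity conditions: (1) ∑_k |A_{n,k}| is uniformly bounded in n; (2) for each fixed k, A_{n,k} → 0 as n → ∞; (3) ∑_k A_{n,k} → 1 as n → ∞. -/

import Mathlib

/-!
Since `χ_n(k+1) = χ_n(k) (1 - k/n)`, the entries telescope: `A_{n,k} = χ_n(k) - χ_n(k+1)`.
Hence each row sums to `χ_n(0) - χ_n(n+1) = 1`, and the entries are nonnegative because the
factors `1 - j/n` with `j < n` are. For fixed `k`, `χ_n(k)` is a product of `k` factors tending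
to `1`, so `A_{n,k} → 1 - 1 = 0`.
-/

noncomputable def chi (n k : ℕ) : ℝ := ∏ j ∈ Finset.range k, (1 - (j : ℝ) / n)

noncomputable def A (n k : ℕ) : ℝ := if k ≤ n then (k : ℝ) * chi n k / n else 0

open Filter Topology

@[simp]
lemma chi_zero (n : ℕ) : chi n 0 = 1 := Finset.prod_range_zero _

lemma chi_succ (n k : ℕ) : chi n (k + 1) = chi n k * (1 - (k : ℝ) / n) :=
  Finset.prod_range_succ _ _

lemma chi_succ_self {n : ℕ} (hn : n ≠ 0) : chi n (n + 1) = 0 := by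
  rw [chi_succ, div_self (Nat.cast_ne_zero.mpr hn), sub_self, mul_zero]

lemma chi_nonneg {n k : ℕ} (h : k ≤ n) : 0 ≤ chi n k :=
  Finset.prod_nonneg fun j hj => sub_nonneg.mpr <|
    div_le_one_of_le₀ (by exact_mod_cast (Finset.mem_range.mp hj).le.trans h) n.cast_nonneg

lemma tendsto_chi_atTop (k : ℕ) : Tendsto (fun n => chi n k) atTop (𝓝 1) := by
  rw [← Finset.prod_const_one (s := Finset.range k)]
  refine tendsto_finsetProd _ fun j _ => ?_
  simpa using (tendsto_const_div_atTop_nhds_zero_nat (j : ℝ)).const_sub 1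

lemma A_eq_chi_sub_chi_succ {n k : ℕ} (h : k ≤ n) : A n k = chi n k - chi n (k + 1) := by
  rw [A, if_pos h, chi_succ]
  ring

lemma A_nonneg (n k : ℕ) : 0 ≤ A n k := by
  unfold A
  split_ifs with h
  · exact div_nonneg (mul_nonneg k.cast_nonneg (chi_nonneg h)) n.cast_nonneg
  · exact le_rfl

lemma sum_A {n : ℕ} (hn : n ≠ 0) : ∑ k ∈ Finset.range (n + 1), A n k = 1 := by
  rw [Finset.sum_congr rfl fun k hk =>
      A_eq_chi_sub_chi_succ (Nat.lt_succ_iff.mp (Finset.mem_range.mp hk)),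
    Finset.sum_range_sub', chi_zero, chi_succ_self hn, sub_zero]

lemma tendsto_A_atTop (k : ℕ) : Tendsto (fun n => A n k) atTop (𝓝 0) := by
  have hlim := (tendsto_chi_atTop k).sub (tendsto_chi_atTop (k + 1))
  rw [sub_self] at hlim
  exact hlim.congr' <| (eventually_ge_atTop k).mono fun n h => (A_eq_chi_sub_chi_succ h).symm

/-- The matrix A_{n,k} = k·χ_n(k)/n satisfies the Toeplitz–Schur regularity conditions. -/
theorem chi_toeplitz_schur :
    (∃ H : ℝ, ∀ n : ℕ, 1 ≤ n → ∑ k ∈ Finset.range (n + 1), |A n k| ≤ H) ∧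
    (∀ k : ℕ, Filter.Tendsto (fun n : ℕ => A n k) Filter.atTop (nhds 0)) ∧
    Filter.Tendsto (fun n : ℕ => ∑ k ∈ Finset.range (n + 1), A n k)
      Filter.atTop (nhds 1) := by
  refine ⟨⟨1, fun n hn => ?_⟩, tendsto_A_atTop, ?_⟩
  · simp_rw [abs_of_nonneg (A_nonneg n _)]
    exact (sum_A (Nat.one_le_iff_ne_zero.mp hn)).le
  · exact tendsto_const_nhds.congr' <|
      (eventually_ne_atTop 0).mono fun n hn => (sum_A hn).symm
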